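/- Let L be a split δ Jordan-Lie algebra with symmetric root system Λ and α ∈ Λ. Then the subalgebra L_{Λ_α} = H_{Λ_α} ⊕ V_{Λ_α}, where H_{Λ_α} = span{[L_β, L_{-β}] : β ∈ Λ_α} and V_{Λ_α} = ⊕_{β∈Λ_α} L_β, is an ideal of L. -/

import Mathlib

/-- A δ Jordan-Lie algebra: a vector space with a bilinear bracket satisfying
`[x,y] = -δ[y,x]` and `[x,[y,z]] = δ[[x,y],z] + δ[y,[x,z]]` with `δ = ±1`. -/
structure DeltaJordanLie (K L : Type*) [Field K] [AddCommGroup L] [Module K L] where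
  br : L →ₗ[K] L →ₗ[K] L
  delta : K
  delta_pm : delta = 1 ∨ delta = -1
  anti : ∀ x y : L, br x y = -(delta • br y x)
  jacobi : ∀ x y z : L, br x (br y z) = delta • br (br x y) z + delta • br y (br x z)

variable {K L : Type*} [Field K] [AddCommGroup L] [Module K L]

/-- The root space `L_α = {v ∈ L : [h,v] = α(h)v for all h ∈ H}`. -/
def DeltaJordanLie.rootSpace (J : DeltaJordanLie K L) (H : Submodule K L)
    (α : Module.Dual K H) : Submodule K L where
  carrier := {v : L | ∀ h : H, J.br (h : L) v = α h • v}
  zero_mem' := by intro h; simp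
  add_mem' := by intro a b ha hb h; simp [ha h, hb h, smul_add]
  smul_mem' := by intro c a ha h; rw [map_smul, ha h, smul_comm]

/-- The root system `Λ = {α ∈ H* \ {0} : L_α ≠ 0}`. -/
def DeltaJordanLie.roots (J : DeltaJordanLie K L) (H : Submodule K L) :
    Set (Module.Dual K H) :=
  {α | α ≠ 0 ∧ J.rootSpace H α ≠ ⊥}

/-- `H` is a splitting Cartan subalgebra: a maximal abelian subalgebra such that
`L` decomposes as the direct sum of the simultaneous eigenspaces `L_α`, with `L_0 = H`. -/
structure DeltaJordanLie.IsSplitting (J : DeltaJordanLie K L) (H : Submodule K L) : Prop where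
  abelian : ∀ x ∈ H, ∀ y ∈ H, J.br x y = 0
  maximal : ∀ H' : Submodule K L, H ≤ H' →
      (∀ x ∈ H', ∀ y ∈ H', J.br x y = 0) → H' = H
  zero_rootSpace : J.rootSpace H 0 = H
  indep : iSupIndep (fun α : Module.Dual K H => J.rootSpace H α)
  decomp : (⨆ α : Module.Dual K H, J.rootSpace H α) = ⊤

/-- The root system is symmetric. -/
def DeltaJordanLie.SymmetricRoots (J : DeltaJordanLie K L) (H : Submodule K L) : Prop :=
  ∀ α ∈ J.roots H, -α ∈ J.roots H

/-- The δ-twisted partial sums of a sequence of roots: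
`s₀ = f 0`, `s_{k+1} = δ • (s_k + f (k+1))`, so that
`s_k = δ^k f 0 + δ^k f 1 + δ^{k-1} f 2 + ⋯ + δ f k`. -/
def connSum {H : Submodule K L} (d : K) (f : ℕ → Module.Dual K H) : ℕ → Module.Dual K H
  | 0 => f 0
  | k + 1 => d • (connSum d f k + f (k + 1))

/-- `f 0, …, f n` is a connection from `α` to `β`: all terms are roots, `f 0 = α`,
all proper δ-twisted partial sums are roots, and the final sum is `±β`. -/
def IsConnection (J : DeltaJordanLie K L) (H : Submodule K L)
    (α β : Module.Dual K H) (n : ℕ) (f : ℕ → Module.Dual K H) : Prop :=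
  (∀ i ≤ n, f i ∈ J.roots H) ∧ f 0 = α ∧
  (∀ k < n, connSum J.delta f k ∈ J.roots H) ∧
  (connSum J.delta f n = β ∨ connSum J.delta f n = -β)

/-- `α` and `β` are connected. -/
def Connected (J : DeltaJordanLie K L) (H : Submodule K L)
    (α β : Module.Dual K H) : Prop :=
  ∃ n f, IsConnection J H α β n f

/-- `Λ_α`: the set of nonzero roots connected to `α`. -/
def connectedRoots (J : DeltaJordanLie K L) (H : Submodule K L)
    (α : Module.Dual K H) : Set (Module.Dual K H) :=
  {β ∈ J.roots H | Connected J H α β}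

/-- An ideal of a δ Jordan-Lie algebra: a submodule with `[I,L] ⊆ I` and `[L,I] ⊆ I`. -/
def IsIdeal (J : DeltaJordanLie K L) (I : Submodule K L) : Prop :=
  ∀ x ∈ I, ∀ y : L, J.br x y ∈ I ∧ J.br y x ∈ I

/-- `H_S = span{[L_β, L_{-β}] : β ∈ S}`. -/
def rootSpan (J : DeltaJordanLie K L) (H : Submodule K L)
    (S : Set (Module.Dual K H)) : Submodule K L :=
  Submodule.span K {z : L | ∃ β ∈ S, ∃ x ∈ J.rootSpace H β, ∃ y ∈ J.rootSpace H (-β),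
    z = J.br x y}

/-- `L_S = H_S ⊕ V_S`, the subalgebra associated to a set of roots `S`. -/
def decIdeal (J : DeltaJordanLie K L) (H : Submodule K L)
    (S : Set (Module.Dual K H)) : Submodule K L :=
  rootSpan J H S ⊔ ⨆ β ∈ S, J.rootSpace H β

/-!
Since `L` is the sum of the root spaces, it suffices to bracket with root vectors. If `β ∈ Λ_α`
and `[L_β, L_γ] ≠ 0`, then `δ(β + γ)` is either `0`, in which case the bracket lies in
`[L_β, L_{-β}] ⊆ H_{Λ_α}`, or a root; that root is `±β` if `γ = 0`, and otherwise it is connected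
to `α` by appending `±γ` to a connection from `α` to `β`. For the Cartan part, the Jacobi identity
rewrites `[[u, v], y]` with `u ∈ L_β`, `v ∈ L_{-β}` as a combination of `[u, [v, y]]` and
`[v, [u, y]]`, brackets of root vectors of `±β ∈ Λ_α`.
-/

namespace DeltaJordanLie

variable (J : DeltaJordanLie K L)

lemma delta_mul_self : J.delta * J.delta = 1 := by
  rcases J.delta_pm with h | h <;> rw [h] <;> norm_num

lemma delta_ne_zero : J.delta ≠ 0 := by
  rcases J.delta_pm with h | h <;> rw [h] <;> norm_num

lemma br_br_left (u v y : L) :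
    J.br (J.br u v) y = J.delta • J.br u (J.br v y) - J.br v (J.br u y) := by
  rw [J.jacobi, smul_add, smul_smul, smul_smul, delta_mul_self, one_smul, one_smul,
    add_sub_cancel_right]

lemma isIdeal_of_br_mem {I : Submodule K L} (h : ∀ x ∈ I, ∀ y, J.br x y ∈ I) : IsIdeal J I :=
  fun x hx y => ⟨h x hx y, by
    rw [J.anti y x]
    exact I.neg_mem (I.smul_mem _ (h x hx y))⟩

variable {H : Submodule K L}

lemma br_mem_rootSpace {β γ : Module.Dual K H} {u v : L} (hu : u ∈ J.rootSpace H β)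
    (hv : v ∈ J.rootSpace H γ) : J.br u v ∈ J.rootSpace H (J.delta • (β + γ)) := by
  intro h
  rw [J.jacobi, hu h, hv h]
  simp only [map_smul, LinearMap.smul_apply, LinearMap.add_apply, smul_smul, smul_eq_mul]
  rw [mul_add, add_smul]

variable {J} in
lemma IsSplitting.br_mem_of_forall_rootSpace (hs : J.IsSplitting H) (p : Submodule K L) (x : L)
    (h : ∀ γ, ∀ y ∈ J.rootSpace H γ, J.br x y ∈ p) (y : L) : J.br x y ∈ p := by
  have htop : ⊤ ≤ p.comap (J.br x) := hs.decomp ▸ iSup_le fun γ y hy => h γ y hy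
  exact htop Submodule.mem_top

end DeltaJordanLie

open DeltaJordanLie

section RootSystem

variable {J : DeltaJordanLie K L} {H : Submodule K L} {α β γ : Module.Dual K H}

lemma connSum_congr (d : K) {f g : ℕ → Module.Dual K H} {n : ℕ} (h : ∀ i ≤ n, g i = f i)
    {k : ℕ} (hk : k ≤ n) : connSum d g k = connSum d f k := by
  induction k with
  | zero => exact h 0 (Nat.zero_le n)
  | succ k ih => rw [connSum, connSum, ih (by omega), h (k + 1) hk]

lemma IsConnection.neg {n : ℕ} {f : ℕ → Module.Dual K H} (hf : IsConnection J H α β n f) :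
    IsConnection J H α (-β) n f := by
  obtain ⟨hroots, h0, hsums, hend⟩ := hf
  exact ⟨hroots, h0, hsums, by rwa [neg_neg, or_comm]⟩

lemma IsConnection.snoc {n : ℕ} {f : ℕ → Module.Dual K H} (hf : IsConnection J H α β n f)
    (hn : connSum J.delta f n ∈ J.roots H) (hγ : γ ∈ J.roots H) :
    IsConnection J H α (J.delta • (connSum J.delta f n + γ)) (n + 1)
      (fun i => if i ≤ n then f i else γ) := by
  obtain ⟨hroots, h0, hsums, -⟩ := hf
  have hcongr : ∀ k ≤ n, connSum J.delta (fun i => if i ≤ n then f i else γ) k =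
      connSum J.delta f k := fun k => connSum_congr _ fun i hi => if_pos hi
  refine ⟨fun i hi => ?_, by simpa using h0, fun k hk => ?_, Or.inl ?_⟩
  · dsimp only
    split_ifs with h
    · exact hroots i h
    · exact hγ
  · rw [hcongr k (by omega)]
    rcases Nat.lt_or_ge k n with hk' | hk'
    · exact hsums k hk'
    · rwa [show k = n by omega]
  · rw [connSum, hcongr n le_rfl, if_neg (by omega)]

lemma Connected.neg (h : Connected J H α β) : Connected J H α (-β) :=
  let ⟨n, f, hf⟩ := h
  ⟨n, f, hf.neg⟩

lemma Connected.delta_smul (h : Connected J H α β) : Connected J H α (J.delta • β) := by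
  rcases J.delta_pm with hd | hd
  · rw [hd, one_smul]; exact h
  · rw [hd]; convert h.neg using 1; exact neg_one_smul K β

lemma Connected.delta_smul_add (hsym : J.SymmetricRoots H) (h : Connected J H α β)
    (hβ : β ∈ J.roots H) (hγ : γ ∈ J.roots H) : Connected J H α (J.delta • (β + γ)) := by
  obtain ⟨n, f, hf⟩ := h
  rcases hf.2.2.2 with hn | hn
  · exact ⟨n + 1, _, hn ▸ hf.snoc (hn ▸ hβ) hγ⟩
  · have := hf.snoc (hn ▸ hsym β hβ) (hsym γ hγ)
    rw [hn, ← neg_add, smul_neg] at this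
    simpa using Connected.neg ⟨n + 1, _, this⟩

lemma neg_mem_connectedRoots (hsym : J.SymmetricRoots H) (hβ : β ∈ connectedRoots J H α) :
    -β ∈ connectedRoots J H α :=
  ⟨hsym β hβ.1, hβ.2.neg⟩

lemma rootSpace_le_decIdeal {S : Set (Module.Dual K H)} (hγ : γ ∈ S) :
    J.rootSpace H γ ≤ decIdeal J H S :=
  (le_biSup (fun β => J.rootSpace H β) hγ).trans le_sup_right

lemma br_rootSpace_mem_decIdeal (hsym : J.SymmetricRoots H)
    (hβ : β ∈ connectedRoots J H α) {w y : L} (hw : w ∈ J.rootSpace H β)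
    (hy : y ∈ J.rootSpace H γ) : J.br w y ∈ decIdeal J H (connectedRoots J H α) := by
  by_cases hzero : J.br w y = 0
  · rw [hzero]; exact zero_mem _
  have hbr := J.br_mem_rootSpace hw hy
  by_cases hsum : J.delta • (β + γ) = 0
  · have hγβ : γ = -β :=
      eq_neg_of_add_eq_zero_right ((smul_eq_zero.mp hsum).resolve_left J.delta_ne_zero)
    exact Submodule.mem_sup_left (Submodule.subset_span ⟨β, hβ, w, hw, y, hγβ ▸ hy, rfl⟩)
  have hroot : J.delta • (β + γ) ∈ J.roots H :=
    ⟨hsum, (Submodule.ne_bot_iff _).mpr ⟨_, hbr, hzero⟩⟩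
  have hconn : Connected J H α (J.delta • (β + γ)) := by
    by_cases hγ0 : γ = 0
    · simpa [hγ0] using hβ.2.delta_smul
    have hy0 : y ≠ 0 := fun h => hzero (by rw [h, map_zero])
    exact hβ.2.delta_smul_add hsym hβ.1 ⟨hγ0, (Submodule.ne_bot_iff _).mpr ⟨y, hy, hy0⟩⟩
  exact rootSpace_le_decIdeal (S := connectedRoots J H α) ⟨hroot, hconn⟩ hbr

lemma br_mem_decIdeal (hs : J.IsSplitting H) (hsym : J.SymmetricRoots H) {x : L}
    (hx : x ∈ decIdeal J H (connectedRoots J H α)) (y : L) :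
    J.br x y ∈ decIdeal J H (connectedRoots J H α) := by
  set I := decIdeal J H (connectedRoots J H α)
  suffices hle : I ≤ ⨅ y, I.comap (J.br.flip y) from Submodule.mem_iInf _ |>.mp (hle hx) y
  refine sup_le (Submodule.span_le.mpr ?_) (iSup₂_le fun β hβ w hw => ?_)
  · rintro _ ⟨β, hβ, u, hu, v, hv, rfl⟩
    simp only [SetLike.mem_coe, Submodule.mem_iInf, Submodule.mem_comap, LinearMap.flip_apply]
    refine hs.br_mem_of_forall_rootSpace I _ fun γ y hy => ?_
    rw [br_br_left]
    exact sub_mem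
      (I.smul_mem _ (br_rootSpace_mem_decIdeal hsym hβ hu (J.br_mem_rootSpace hv hy)))
      (br_rootSpace_mem_decIdeal hsym (neg_mem_connectedRoots hsym hβ) hv
        (J.br_mem_rootSpace hu hy))
  · simp only [Submodule.mem_iInf, Submodule.mem_comap, LinearMap.flip_apply]
    exact hs.br_mem_of_forall_rootSpace I w fun γ y hy =>
      br_rootSpace_mem_decIdeal hsym hβ hw hy

end RootSystem

theorem stmt7_general (J : DeltaJordanLie K L) (H : Submodule K L) (hs : J.IsSplitting H)
    (hsym : J.SymmetricRoots H) (α : Module.Dual K H) :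
    IsIdeal J (decIdeal J H (connectedRoots J H α)) :=
  J.isIdeal_of_br_mem fun _ hx y => br_mem_decIdeal hs hsym hx y

/-- the subalgebra `L_{Λ_α} = H_{Λ_α} ⊕ V_{Λ_α}` is an ideal of `L`. -/
theorem stmt7 (J : DeltaJordanLie K L) (H : Submodule K L) (hs : J.IsSplitting H)
    (hsym : J.SymmetricRoots H) (α : Module.Dual K H) (hα : α ∈ J.roots H) :
    IsIdeal J (decIdeal J H (connectedRoots J H α)) :=
  stmt7_general J H hs hsym α
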